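/- Let f(n) = 2^{s₂(n)} be the number of odd entries in the n-th row of Pascal's triangle. Then lim_{n→∞} Var(ln(f(N)))/ln(n) = ln(2)/4; equivalently, lim_{n→∞} Var(s₂(N))/log₂(n) = 1/4. -/

import Mathlib

/-!
Write `V n` for the variance of `s₂` on `{0, …, n-1}`. Since `s₂ (2k) = s₂ k` and
`s₂ (2k+1) = s₂ k + 1`, the values of `s₂` on `{0, …, 2n-1}` are those on `{0, …, n-1}` together
with the same values shifted by `1`, so `V (2n) = V n + 1/4` exactly. Appending one value to a
sample of size `m` with values in an interval of length `K` moves the variance by at most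
`2K²/(m+1)`; with `K = O(log n)` this gives `V (2n+1) = V (2n) + O(log² n / n)`. Reading the
binary expansion of `n` from its leading digit, these errors are summable, so
`V n = ⌊log₂ n⌋/4 + O(1)`. The logarithmic form follows from `ln f(N) = s₂(N) ln 2`.
-/

open Finset Filter Real Topology

namespace BinomialDispersion

noncomputable def uniformVar (x : ℕ → ℝ) (n : ℕ) : ℝ :=
  (1 / (n : ℝ)) * ∑ k ∈ range n, x k ^ 2 - ((1 / (n : ℝ)) * ∑ k ∈ range n, x k) ^ 2

section UniformVar

variable (x : ℕ → ℝ)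

theorem uniformVar_const_mul (c : ℝ) (n : ℕ) :
    uniformVar (fun k => c * x k) n = c ^ 2 * uniformVar x n := by
  simp only [uniformVar, mul_pow, ← mul_sum]
  ring

theorem sq_mul_uniformVar (n : ℕ) :
    (n : ℝ) ^ 2 * uniformVar x n
      = n * ∑ k ∈ range n, x k ^ 2 - (∑ k ∈ range n, x k) ^ 2 := by
  rcases eq_or_ne n 0 with rfl | hn
  · simp
  · have : (n : ℝ) ≠ 0 := Nat.cast_ne_zero.mpr hn
    simp only [uniformVar]
    field_simp

theorem sq_mul_uniformVar_succ (n : ℕ) :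
    ((n : ℝ) + 1) ^ 2 * uniformVar x (n + 1)
      = n ^ 2 * uniformVar x n + ∑ j ∈ range n, (x j - x n) ^ 2 := by
  have hexpand : ∑ j ∈ range n, (x j - x n) ^ 2
      = ∑ j ∈ range n, x j ^ 2 - 2 * (∑ j ∈ range n, x j) * x n + n * x n ^ 2 := by
    simp only [sub_sq, sum_add_distrib, sum_sub_distrib, sum_const, card_range, nsmul_eq_mul,
      mul_sum, sum_mul]
  have := sq_mul_uniformVar x (n + 1)
  push_cast at this
  rw [this, sq_mul_uniformVar, hexpand, sum_range_succ, sum_range_succ]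
  ring

theorem uniformVar_nonneg (n : ℕ) : 0 ≤ uniformVar x n := by
  rcases eq_or_ne n 0 with rfl | hn
  · simp [uniformVar]
  · have hcs := sq_sum_le_card_mul_sum_sq (s := range n) (f := x)
    rw [card_range] at hcs
    have := sq_mul_uniformVar x n
    have hpos : (0 : ℝ) < (n : ℝ) ^ 2 := by positivity
    exact nonneg_of_mul_nonneg_right (by linarith) hpos

theorem sum_sq_sub_le {n : ℕ} {K : ℝ} (hx : ∀ j < n, |x j - x n| ≤ K) :
    ∑ j ∈ range n, (x j - x n) ^ 2 ≤ n * K ^ 2 := by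
  simpa using sum_le_card_nsmul (range n) (fun j => (x j - x n) ^ 2) (K ^ 2) fun j hj =>
    sq_le_sq' (abs_le.mp (hx j (mem_range.mp hj))).1 (abs_le.mp (hx j (mem_range.mp hj))).2

theorem uniformVar_le_sq {n : ℕ} {K : ℝ} (hx : ∀ j < n, ∀ k < n, |x j - x k| ≤ K) :
    uniformVar x n ≤ K ^ 2 := by
  suffices h : (n : ℝ) ^ 2 * uniformVar x n ≤ n ^ 2 * K ^ 2 by
    rcases eq_or_ne n 0 with rfl | hn
    · simp [uniformVar]; positivity
    · exact le_of_mul_le_mul_left h (by positivity)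
  induction n with
  | zero => simp
  | succ n ih =>
    have hstep := sum_sq_sub_le x fun j hj => hx j (by omega) n (by omega)
    have := ih fun j hj k hk => hx j (by omega) k (by omega)
    push_cast
    rw [sq_mul_uniformVar_succ]
    nlinarith [sq_nonneg K]

theorem abs_uniformVar_succ_sub_le {m : ℕ} {K : ℝ}
    (hx : ∀ j ≤ m, ∀ k ≤ m, |x j - x k| ≤ K) :
    |uniformVar x (m + 1) - uniformVar x m| ≤ 2 * K ^ 2 / (m + 1) := by
  set D := ∑ j ∈ range m, (x j - x m) ^ 2
  have hD : D ≤ m * K ^ 2 := sum_sq_sub_le x fun j hj => hx j hj.le m le_rfl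
  have hV := uniformVar_le_sq x fun j hj k hk => hx j hj.le k hk.le
  have hm : (0 : ℝ) < m + 1 := by positivity
  have hsucc : uniformVar x (m + 1) - uniformVar x m
      = D / (m + 1) ^ 2 - (2 * m + 1) * uniformVar x m / (m + 1) ^ 2 := by
    have := sq_mul_uniformVar_succ x m
    field_simp
    linear_combination this
  have hV0 := uniformVar_nonneg x m
  rw [hsucc]
  apply abs_sub_le_of_nonneg_of_le (by positivity) _ (by positivity)
  · rw [div_le_div_iff₀ (by positivity) hm]
    nlinarith [mul_le_mul_of_nonneg_left hV (by positivity : (0 : ℝ) ≤ (2 * m + 1) * (m + 1))]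
  · rw [div_le_div_iff₀ (by positivity) hm]
    nlinarith [mul_le_mul_of_nonneg_left hD hm.le, sq_nonneg K]

end UniformVar

def s₂ (k : ℕ) : ℕ := (Nat.digits 2 k).sum

noncomputable def s₂Var (n : ℕ) : ℝ := uniformVar (fun k => (s₂ k : ℝ)) n

theorem s₂_two_mul (k : ℕ) : s₂ (2 * k) = s₂ k := by
  rcases Nat.eq_zero_or_pos k with rfl | hk
  · rfl
  · simp [s₂, Nat.digits_def' one_lt_two (by omega : 0 < 2 * k)]

theorem s₂_two_mul_add_one (k : ℕ) : s₂ (2 * k + 1) = s₂ k + 1 := by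
  rw [s₂, s₂, Nat.digits_def' one_lt_two (by omega), List.sum_cons,
    show (2 * k + 1) / 2 = k by omega, show (2 * k + 1) % 2 = 1 by omega, add_comm]

theorem s₂_le_of_lt_two_pow {k m : ℕ} (h : k < 2 ^ m) : s₂ k ≤ m := by
  have hdigit : ∀ d ∈ Nat.digits 2 k, d ≤ 1 := fun d hd =>
    Nat.lt_succ_iff.mp (Nat.digits_lt_base one_lt_two hd)
  calc s₂ k ≤ (Nat.digits 2 k).length • 1 := List.sum_le_card_nsmul _ _ hdigit
    _ ≤ m := by simpa using (Nat.digits_length_le_iff one_lt_two k).mpr h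

theorem sum_range_two_mul_s₂ {M : Type*} [AddCommMonoid M] (g : ℕ → M) (n : ℕ) :
    ∑ k ∈ range (2 * n), g (s₂ k) = ∑ j ∈ range n, (g (s₂ j) + g (s₂ j + 1)) := by
  induction n with
  | zero => simp
  | succ n ih =>
    rw [mul_add_one, sum_range_succ, sum_range_succ, sum_range_succ, ih, s₂_two_mul_add_one,
      s₂_two_mul, add_assoc]

theorem s₂Var_two_mul {n : ℕ} (hn : n ≠ 0) : s₂Var (2 * n) = s₂Var n + 1 / 4 := by
  have hsum := sum_range_two_mul_s₂ (fun i => (i : ℝ)) n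
  have hsum_sq := sum_range_two_mul_s₂ (fun i => (i : ℝ) ^ 2) n
  simp only [Nat.cast_add, Nat.cast_one, add_sq, mul_one, one_pow, sum_add_distrib, sum_const,
    card_range, nsmul_eq_mul, ← mul_sum] at hsum hsum_sq
  have : (n : ℝ) ≠ 0 := Nat.cast_ne_zero.mpr hn
  simp only [s₂Var, uniformVar, Nat.cast_mul, Nat.cast_ofNat, hsum, hsum_sq]
  field_simp
  ring

theorem natLog_mul_add {b r i : ℕ} (hb : 1 < b) (hr : r ≠ 0) (hi : i < b) :
    Nat.log b (b * r + i) = Nat.log b r + 1 := by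
  have hlog := Nat.log_div_base b (b * r + i)
  rw [Nat.mul_add_div (by omega), Nat.div_eq_of_lt hi, add_zero] at hlog
  have hpos : 0 < Nat.log b (b * r + i) :=
    Nat.log_pos hb (by nlinarith [Nat.one_le_iff_ne_zero.mpr hr])
  omega

theorem abs_s₂Var_two_mul_add_one_sub_le {r : ℕ} (hr : r ≠ 0) :
    |s₂Var (2 * r + 1) - s₂Var (2 * r)|
      ≤ ((Nat.log 2 r : ℝ) + 2) ^ 2 / 2 ^ Nat.log 2 r := by
  set L := Nat.log 2 r
  have hs : ∀ j ≤ 2 * r, (s₂ j : ℝ) ≤ L + 2 := fun j hj => by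
    have hrL : r < 2 ^ (L + 1) := Nat.lt_pow_succ_log_self one_lt_two r
    exact_mod_cast s₂_le_of_lt_two_pow (m := L + 2) (by rw [pow_succ]; omega)
  have hvar := abs_uniformVar_succ_sub_le (fun k => (s₂ k : ℝ)) (m := 2 * r) (K := L + 2)
    fun j hj k hk => abs_sub_le_of_nonneg_of_le (by positivity) (hs j hj) (by positivity) (hs k hk)
  have hpow : (2 : ℝ) ^ (L + 1) ≤ 2 * r := by
    rw [pow_succ']
    gcongr
    exact_mod_cast Nat.pow_log_le_self 2 hr
  calc _ ≤ 2 * ((L : ℝ) + 2) ^ 2 / ((2 * r : ℕ) + 1) := hvar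
    _ ≤ 2 * ((L : ℝ) + 2) ^ 2 / 2 ^ (L + 1) := by
      gcongr
      push_cast
      linarith
    _ = ((L : ℝ) + 2) ^ 2 / 2 ^ L := by
      field_simp
      ring

/-- Closed form of `∑ i < l, (i+2)² / 2^i`; the full series sums to `22`. -/
noncomputable def defectBound (l : ℕ) : ℝ := 22 - (2 * l ^ 2 + 12 * l + 22) / 2 ^ l

theorem defectBound_succ (l : ℕ) :
    defectBound (l + 1) = defectBound l + ((l : ℝ) + 2) ^ 2 / 2 ^ l := by
  simp only [defectBound, pow_succ]
  push_cast
  field_simp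
  ring

theorem defectBound_le (l : ℕ) : defectBound l ≤ 22 := by
  simp only [defectBound, sub_le_self_iff]
  positivity

theorem abs_s₂Var_sub_log_le {n : ℕ} (hn : n ≠ 0) :
    |s₂Var n - Nat.log 2 n / 4| ≤ defectBound (Nat.log 2 n) := by
  induction n using Nat.strong_induction_on with
  | _ n ih =>
    rcases lt_or_ge n 2 with hn2 | hn2
    · obtain rfl : n = 1 := by omega
      simp [s₂Var, uniformVar, defectBound, s₂]
    obtain ⟨r, rfl | rfl⟩ := Nat.even_or_odd' n
    · have hr : r ≠ 0 := by omega
      have ihr := ih r (by omega) hr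
      have hlog : Nat.log 2 (2 * r) = Nat.log 2 r + 1 := by
        simpa using natLog_mul_add one_lt_two hr two_pos
      rw [hlog, s₂Var_two_mul hr, defectBound_succ]
      push_cast
      calc _ = |s₂Var r - Nat.log 2 r / 4| := by ring_nf
        _ ≤ _ := ihr
        _ ≤ _ := le_add_of_nonneg_right (by positivity)
    · have hr : r ≠ 0 := by omega
      have ihr := ih r (by omega) hr
      have hstep := abs_s₂Var_two_mul_add_one_sub_le hr
      rw [natLog_mul_add one_lt_two hr one_lt_two, defectBound_succ]
      calc _ ≤ |s₂Var (2 * r + 1) - s₂Var (2 * r)|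
            + |s₂Var (2 * r) - (Nat.log 2 r + 1 : ℕ) / 4| := abs_sub_le _ _ _
        _ = |s₂Var (2 * r + 1) - s₂Var (2 * r)| + |s₂Var r - Nat.log 2 r / 4| := by
          rw [s₂Var_two_mul hr]
          push_cast
          ring_nf
        _ ≤ _ := by linarith

theorem abs_s₂Var_sub_logb_le {n : ℕ} (hn : n ≠ 0) : |s₂Var n - logb 2 n / 4| ≤ 23 := by
  have hlow : (Nat.log 2 n : ℝ) ≤ logb 2 n := by exact_mod_cast natLog_le_logb n 2
  have hup : logb 2 n < Nat.log 2 n + 1 := by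
    have hfloor : ⌊logb 2 (n : ℝ)⌋₊ = Nat.log 2 n := by
      exact_mod_cast natFloor_logb_natCast 2 n
    exact hfloor ▸ Nat.lt_floor_add_one _
  have hdefect := (abs_s₂Var_sub_log_le hn).trans (defectBound_le _)
  rw [abs_le] at hdefect ⊢
  constructor <;> linarith [hdefect.1, hdefect.2]

theorem tendsto_s₂Var_div_logb :
    Tendsto (fun n : ℕ => s₂Var n / logb 2 n) atTop (𝓝 (1 / 4)) := by
  have hlogb : Tendsto (fun n : ℕ => logb 2 (n : ℝ)) atTop atTop :=
    (tendsto_logb_atTop one_lt_two).comp tendsto_natCast_atTop_atTop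
  have hbounded : (fun n : ℕ => s₂Var n - logb 2 n / 4) =O[atTop] fun _ => (1 : ℝ) :=
    Asymptotics.IsBigO.of_bound 23 <| (eventually_ne_atTop 0).mono fun n hn => by
      simpa using abs_s₂Var_sub_logb_le hn
  have hsmall := hbounded.trans_isLittleO <|
    Asymptotics.isLittleO_const_left.mpr (Or.inr (tendsto_norm_atTop_atTop.comp hlogb))
  have hlim := hsmall.tendsto_div_nhds_zero.const_add (1 / 4)
  rw [add_zero] at hlim
  refine hlim.congr' <| (hlogb.eventually_gt_atTop 0).mono fun n hn => ?_
  field_simp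
  ring

end BinomialDispersion

open BinomialDispersion in
theorem binomial_typical_dispersion :
    (Filter.Tendsto
      (fun n : ℕ =>
        ((1 / (n : ℝ)) * (∑ k ∈ Finset.range n, (Real.log ((2 : ℝ) ^ (Nat.digits 2 k).sum)) ^ 2)
          - ((1 / (n : ℝ)) * ∑ k ∈ Finset.range n,
              Real.log ((2 : ℝ) ^ (Nat.digits 2 k).sum)) ^ 2)
          / Real.log n)
      Filter.atTop (nhds (Real.log 2 / 4)))
    ∧
    (Filter.Tendsto
      (fun n : ℕ =>
        ((1 / (n : ℝ)) * (∑ k ∈ Finset.range n, (((Nat.digits 2 k).sum : ℝ)) ^ 2)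
          - ((1 / (n : ℝ)) * ∑ k ∈ Finset.range n, ((Nat.digits 2 k).sum : ℝ)) ^ 2)
          / Real.logb 2 n)
      Filter.atTop (nhds (1 / 4))) := by
  refine ⟨?_, tendsto_s₂Var_div_logb⟩
  have hlog (k : ℕ) : Real.log ((2 : ℝ) ^ (Nat.digits 2 k).sum) = Real.log 2 * s₂ k := by
    rw [Real.log_pow, s₂, mul_comm]
  simp only [hlog]
  rw [show Real.log 2 / 4 = Real.log 2 * (1 / 4) by ring]
  refine (tendsto_s₂Var_div_logb.const_mul (Real.log 2)).congr fun n => ?_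
  change _ = uniformVar (fun k => Real.log 2 * (s₂ k : ℝ)) n / Real.log n
  rw [uniformVar_const_mul, s₂Var, Real.logb, div_div_eq_mul_div]
  ring
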